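/- Let A = [A_{ij}] and B = [B_{ij}] be positive definite complex matrices of size nk × nk, each regarded as an n × n block matrix with k × k blocks, and let 2 ≤ μ ≤ n. Then both differences (A_μ ∘ B_μ)/(A_{μ−1} ∘ B_{μ−1}) − A_{μμ} ∘ (B_μ/B_{μ−1}) and A_{μμ} ∘ (B_μ/B_{μ−1}) − (A_μ/A_{μ−1}) ∘ (B_μ/B_{μ−1}) are positive semidefinite k × k matrices. -/

import Mathlib

/-! Split the index set of `A_μ` as (the first `μ - 1` blocks) ⊕ (block `μ`), so that `A_μ` is a
`2 × 2` block matrix `M = [[M₁₁, M₁₂], [M₂₁, M₂₂]]` with `M₁₁ = A_{μ-1}`, `M₂₂ = A_{μμ}` and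
`A_μ / A_{μ-1} = M / M₁₁`; likewise `N` for `B`.

The second difference is `(M₂₂ - M / M₁₁) ∘ (N / N₁₁)`, a Hadamard product of positive
semidefinite matrices, because `M₂₂ - M / M₁₁ = M₁₂ᴴ M₁₁⁻¹ M₁₂`.

For the first, replace `N₂₂` by `N₁₂ᴴ N₁₁⁻¹ N₁₂`. The resulting `N'` has vanishing Schur
complement, so it is still positive semidefinite, hence so is `M ∘ N'` by Schur's product
theorem; and the Schur complement of `M₁₁ ∘ N₁₁` in `M ∘ N'` is exactly
`(M ∘ N) / (M₁₁ ∘ N₁₁) - M₂₂ ∘ (N / N₁₁)`. -/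

open Matrix ComplexOrder

/-- The `μk × μk` leading principal block submatrix `A_μ` (for `μ ≤ n`) of an
`n × n` block matrix with `k × k` blocks. -/
def leadBlock {n k : ℕ} (A : Matrix (Fin n × Fin k) (Fin n × Fin k) ℂ)
    (μ : ℕ) (h : μ ≤ n) : Matrix (Fin μ × Fin k) (Fin μ × Fin k) ℂ :=
  A.submatrix (fun p => (Fin.castLE h p.1, p.2)) (fun p => (Fin.castLE h p.1, p.2))

/-- The `μ`-th (1-based) diagonal `k × k` block `A_{μμ}` of an
`n × n` block matrix with `k × k` blocks. -/
def diagBlock {n k : ℕ} (A : Matrix (Fin n × Fin k) (Fin n × Fin k) ℂ)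
    (μ : ℕ) (h : μ - 1 < n) : Matrix (Fin k) (Fin k) ℂ :=
  Matrix.of fun a b => A (⟨μ - 1, h⟩, a) (⟨μ - 1, h⟩, b)

/-- The `k × k` Schur complement `A_μ / A_{μ-1}` of the leading principal block
submatrix `A_{μ-1}` in the leading principal block submatrix `A_μ`, i.e.
`A_{μμ} − M₂₁ A_{μ-1}⁻¹ M₁₂` where `M₂₁` (resp. `M₁₂`) is the `μ`-th block row
(resp. column) of `A_μ` with its last block removed. -/
noncomputable def schurLead {n k : ℕ} (A : Matrix (Fin n × Fin k) (Fin n × Fin k) ℂ)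
    (μ : ℕ) (h : μ - 1 < n) : Matrix (Fin k) (Fin k) ℂ :=
  diagBlock A μ h -
    (Matrix.of fun a (p : Fin (μ - 1) × Fin k) =>
        A (⟨μ - 1, h⟩, a) (Fin.castLE h.le p.1, p.2)) *
      (leadBlock A (μ - 1) h.le)⁻¹ *
      (Matrix.of fun (p : Fin (μ - 1) × Fin k) b =>
        A (Fin.castLE h.le p.1, p.2) (⟨μ - 1, h⟩, b))

namespace Matrix

theorem IsHermitian.toBlocks₂₁_eq {α m p : Type*} [InvolutiveStar α]
    {M : Matrix (m ⊕ p) (m ⊕ p) α} (hM : M.IsHermitian) : M.toBlocks₂₁ = M.toBlocks₁₂ᴴ :=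
  (isHermitian_fromBlocks_iff.mp (by rwa [fromBlocks_toBlocks])).2.1.symm

theorem sub_hadamard {α m n : Type*} [NonUnitalNonAssocRing α] (A B C : Matrix m n α) :
    (A - B) ⊙ C = A ⊙ C - B ⊙ C := by
  ext
  exact sub_mul ..

theorem PosDef.toBlocks₁₁ {𝕜 m p : Type*} [RCLike 𝕜] {M : Matrix (m ⊕ p) (m ⊕ p) 𝕜}
    (hM : M.PosDef) : M.toBlocks₁₁.PosDef :=
  hM.submatrix Sum.inl_injective

variable {𝕜 m p : Type*} [RCLike 𝕜] [Fintype m] [DecidableEq m]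

noncomputable def schurComplement (M : Matrix (m ⊕ p) (m ⊕ p) 𝕜) : Matrix p p 𝕜 :=
  M.toBlocks₂₂ - M.toBlocks₂₁ * M.toBlocks₁₁⁻¹ * M.toBlocks₁₂

theorem schurComplement_hadamard_fromBlocks (M N : Matrix (m ⊕ p) (m ⊕ p) 𝕜) (E : Matrix p p 𝕜) :
    (M ⊙ fromBlocks N.toBlocks₁₁ N.toBlocks₁₂ N.toBlocks₂₁ (N.toBlocks₂₂ - E)).schurComplement =
      (M ⊙ N).schurComplement - M.toBlocks₂₂ ⊙ E := by
  ext i j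
  simp only [Matrix.schurComplement, toBlocks₁₁, toBlocks₁₂, toBlocks₂₁, toBlocks₂₂, sub_apply,
    hadamard_apply, of_apply, fromBlocks_apply₁₁, fromBlocks_apply₁₂, fromBlocks_apply₂₁,
    fromBlocks_apply₂₂, mul_sub]
  ring

variable [Finite p]

theorem PosSemidef.schurComplement {M : Matrix (m ⊕ p) (m ⊕ p) 𝕜} (hM : M.PosSemidef)
    (h₁₁ : M.toBlocks₁₁.PosDef) : M.schurComplement.PosSemidef := by
  have := h₁₁.isUnit.invertible
  have h₂₁ := hM.isHermitian.toBlocks₂₁_eq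
  rw [← fromBlocks_toBlocks M, h₂₁] at hM
  rw [Matrix.schurComplement, h₂₁]
  exact (h₁₁.fromBlocks₁₁ _ _).mp hM

theorem IsHermitian.posSemidef_toBlocks₂₂_sub_schurComplement {M : Matrix (m ⊕ p) (m ⊕ p) 𝕜}
    (hM : M.IsHermitian) (h₁₁ : M.toBlocks₁₁.PosDef) :
    (M.toBlocks₂₂ - M.schurComplement).PosSemidef := by
  rw [Matrix.schurComplement, sub_sub_cancel, hM.toBlocks₂₁_eq]
  exact h₁₁.inv.posSemidef.conjTranspose_mul_mul_same _

theorem PosSemidef.schurComplement_hadamard_sub {M N : Matrix (m ⊕ p) (m ⊕ p) 𝕜}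
    (hM : M.PosSemidef) (hN : N.PosSemidef) (hM₁₁ : M.toBlocks₁₁.PosDef)
    (hN₁₁ : N.toBlocks₁₁.PosDef) :
    ((M ⊙ N).schurComplement - M.toBlocks₂₂ ⊙ N.schurComplement).PosSemidef := by
  have := hN₁₁.isUnit.invertible
  have hN' : (fromBlocks N.toBlocks₁₁ N.toBlocks₁₂ N.toBlocks₂₁
      (N.toBlocks₂₂ - N.schurComplement)).PosSemidef := by
    rw [hN.isHermitian.toBlocks₂₁_eq, hN₁₁.fromBlocks₁₁, ← hN.isHermitian.toBlocks₂₁_eq,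
      Matrix.schurComplement, sub_sub_cancel, sub_self]
    exact .zero
  rw [← schurComplement_hadamard_fromBlocks]
  exact (hM.hadamard hN').schurComplement (hM₁₁.hadamard hN₁₁)

theorem IsHermitian.hadamard_schurComplement_sub {M N : Matrix (m ⊕ p) (m ⊕ p) 𝕜}
    (hM : M.IsHermitian) (hN : N.PosSemidef) (hM₁₁ : M.toBlocks₁₁.PosDef)
    (hN₁₁ : N.toBlocks₁₁.PosDef) :
    (M.toBlocks₂₂ ⊙ N.schurComplement - M.schurComplement ⊙ N.schurComplement).PosSemidef := by
  rw [← sub_hadamard]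
  exact (hM.posSemidef_toBlocks₂₂_sub_schurComplement hM₁₁).hadamard (hN.schurComplement hN₁₁)

end Matrix

def leadingBlockIndex {n : ℕ} (k : ℕ) {μ : ℕ} (h : μ - 1 < n) :
    (Fin (μ - 1) × Fin k) ⊕ Fin k → Fin n × Fin k :=
  Sum.elim (Prod.map (Fin.castLE h.le) id) fun a => (⟨μ - 1, h⟩, a)

theorem leadingBlockIndex_injective {n k μ : ℕ} (h : μ - 1 < n) :
    Function.Injective (leadingBlockIndex k h) :=
  ((Fin.castLE_injective _).prodMap Function.injective_id).sumElim (Prod.mk_right_injective _)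
    fun q _ hqa => q.1.isLt.ne (congrArg (fun x => (x.1 : ℕ)) hqa)

theorem schurLead_eq_schurComplement {n k μ : ℕ} (A : Matrix (Fin n × Fin k) (Fin n × Fin k) ℂ)
    (h : μ - 1 < n) :
    schurLead A μ h =
      (A.submatrix (leadingBlockIndex k h) (leadingBlockIndex k h)).schurComplement :=
  rfl

theorem diagBlock_eq_toBlocks₂₂ {n k μ : ℕ} (A : Matrix (Fin n × Fin k) (Fin n × Fin k) ℂ)
    (h : μ - 1 < n) :
    diagBlock A μ h = (A.submatrix (leadingBlockIndex k h) (leadingBlockIndex k h)).toBlocks₂₂ :=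
  rfl

/-- Inequality (2.7): for positive definite block matrices `A, B ∈ M_n(M_k)` and
`2 ≤ μ ≤ n`, both `(A_μ∘B_μ)/(A_{μ-1}∘B_{μ-1}) − A_{μμ}∘(B_μ/B_{μ-1})` and
`A_{μμ}∘(B_μ/B_{μ-1}) − (A_μ/A_{μ-1})∘(B_μ/B_{μ-1})` are positive semidefinite. -/
theorem schur_hadamard_chain_A {n k : ℕ}
    (A B : Matrix (Fin n × Fin k) (Fin n × Fin k) ℂ)
    (hA : A.PosDef) (hB : B.PosDef)
    (μ : ℕ) (hμ2 : 2 ≤ μ) (hμn : μ ≤ n) :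
    (schurLead (Matrix.hadamard A B) μ (by omega) -
        Matrix.hadamard (diagBlock A μ (by omega)) (schurLead B μ (by omega))).PosSemidef ∧
    (Matrix.hadamard (diagBlock A μ (by omega)) (schurLead B μ (by omega)) -
        Matrix.hadamard (schurLead A μ (by omega)) (schurLead B μ (by omega))).PosSemidef := by
  have h : μ - 1 < n := by omega
  have hA' := hA.submatrix (leadingBlockIndex_injective (k := k) h)
  have hB' := hB.submatrix (leadingBlockIndex_injective (k := k) h)
  simp only [schurLead_eq_schurComplement, diagBlock_eq_toBlocks₂₂, submatrix_hadamard]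
  exact ⟨hA'.posSemidef.schurComplement_hadamard_sub hB'.posSemidef hA'.toBlocks₁₁ hB'.toBlocks₁₁,
    hA'.isHermitian.hadamard_schurComplement_sub hB'.posSemidef hA'.toBlocks₁₁ hB'.toBlocks₁₁⟩
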